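/- For every real μ with 0 < μ < 2, the integral I(μ) = ∫_0^∞ t^{-(1+μ)} (1 - e^{-t²/2}) dt converges and equals -2^{-(1+μ/2)} Γ(-μ/2), where Γ is the real Gamma function (note Γ(-μ/2) < 0 for 0 < μ < 2, so I(μ) > 0). -/

import Mathlib

/-!
Substituting `s = t² / 2` turns `I(μ)` into `2^{-(1+μ/2)} ∫₀^∞ s^{-(1+a)} (1 - e^{-s}) ds`
with `a = μ/2 ∈ (0, 1)`. Integrating by parts against `-s^{-a}/a` (the boundary terms vanish because
`1 - e^{-s} ≤ s` near `0` and `s^{-a} → 0` at `∞`) leaves `Γ(1 - a)/a = -Γ(-a)`.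
-/

open MeasureTheory Set Filter Real Topology

lemma one_sub_exp_neg_nonneg {s : ℝ} (hs : 0 ≤ s) : 0 ≤ 1 - exp (-s) :=
  sub_nonneg.2 (exp_le_one_iff.2 (neg_nonpos.2 hs))

lemma one_sub_exp_neg_le (s : ℝ) : 1 - exp (-s) ≤ s := by
  linarith [add_one_le_exp (-s)]

lemma integrableOn_of_continuousOn_of_norm_le {E : Type*} [NormedAddCommGroup E]
    {μ : Measure ℝ} {f : ℝ → E} {g : ℝ → ℝ} {s : Set ℝ} (hs : MeasurableSet s)
    (hg : IntegrableOn g s μ) (hf : ContinuousOn f s) (hfg : ∀ x ∈ s, ‖f x‖ ≤ g x) : IntegrableOn f s μ :=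
  Integrable.mono' hg (hf.aestronglyMeasurable hs) ((ae_restrict_iff' hs).2 (ae_of_all _ hfg))

section
variable {a : ℝ}

lemma integrableOn_rpow_mul_one_sub_exp_neg (ha0 : 0 < a) (ha1 : a < 1) :
    IntegrableOn (fun s : ℝ => s ^ (-(1 + a)) * (1 - exp (-s))) (Ioi 0) := by
  have hcont : ContinuousOn (fun s : ℝ => s ^ (-(1 + a)) * (1 - exp (-s))) (Ioi 0) :=
    (continuousOn_id.rpow_const fun s hs => Or.inl (ne_of_gt hs)).mul (by fun_prop)
  have hnorm : ∀ s ∈ Ioi (0 : ℝ),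
      ‖s ^ (-(1 + a)) * (1 - exp (-s))‖ = s ^ (-(1 + a)) * (1 - exp (-s)) := fun s (hs : 0 < s) =>
    norm_of_nonneg (mul_nonneg (rpow_nonneg hs.le _) (one_sub_exp_neg_nonneg hs.le))
  rw [← Ioc_union_Ioi_eq_Ioi zero_le_one, integrableOn_union]
  constructor
  · have hdom : IntegrableOn (fun s : ℝ => s ^ (-a)) (Ioc 0 1) :=
      (intervalIntegrable_iff_integrableOn_Ioc_of_le zero_le_one).1
        (intervalIntegral.intervalIntegrable_rpow' (by linarith))
    refine integrableOn_of_continuousOn_of_norm_le measurableSet_Ioc hdom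
      (hcont.mono Ioc_subset_Ioi_self) fun s hs => ?_
    rw [hnorm s hs.1]
    calc s ^ (-(1 + a)) * (1 - exp (-s)) ≤ s ^ (-(1 + a)) * s :=
          mul_le_mul_of_nonneg_left (one_sub_exp_neg_le s) (rpow_nonneg hs.1.le _)
      _ = s ^ (-a) := by rw [← rpow_add_one hs.1.ne']; ring_nf
  · have hdom : IntegrableOn (fun s : ℝ => s ^ (-(1 + a))) (Ioi 1) :=
      integrableOn_Ioi_rpow_of_lt (by linarith) zero_lt_one
    refine integrableOn_of_continuousOn_of_norm_le measurableSet_Ioi hdom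
      (hcont.mono (Ioi_subset_Ioi zero_le_one)) fun s hs => ?_
    have hs0 : (0 : ℝ) < s := zero_lt_one.trans hs
    rw [hnorm s hs0]
    exact mul_le_of_le_one_right (rpow_nonneg hs0.le _) (by linarith [exp_pos (-s)])

theorem integral_rpow_mul_one_sub_exp_neg (ha0 : 0 < a) (ha1 : a < 1) :
    ∫ s in Ioi 0, s ^ (-(1 + a)) * (1 - exp (-s)) = -Gamma (-a) := by
  have hu : ∀ s ∈ Ioi (0 : ℝ), HasDerivAt (fun s => 1 - exp (-s)) (exp (-s)) s :=
    fun s _ => by simpa using ((hasDerivAt_neg s).exp).const_sub 1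
  have hv : ∀ s ∈ Ioi (0 : ℝ), HasDerivAt (fun s => -s ^ (-a) / a) (s ^ (-(1 + a))) s :=
    fun s (hs : 0 < s) => by
      refine ((hasDerivAt_rpow_const (p := -a) (Or.inl hs.ne')).neg.div_const a).congr_deriv ?_
      rw [show -a - 1 = -(1 + a) by ring]
      field_simp
  have huv' : IntegrableOn (fun s => (1 - exp (-s)) * s ^ (-(1 + a))) (Ioi 0) := by
    simpa only [mul_comm] using integrableOn_rpow_mul_one_sub_exp_neg ha0 ha1
  have hgamma : IntegrableOn (fun s => exp (-s) * s ^ (1 - a - 1)) (Ioi 0) :=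
    GammaIntegral_convergent (by linarith)
  have hu'v : IntegrableOn (fun s => exp (-s) * (-s ^ (-a) / a)) (Ioi 0) := by
    refine IntegrableOn.congr_fun (hgamma.neg.div_const a) (fun s _ => ?_) measurableSet_Ioi
    simp only [Pi.neg_apply]
    ring_nf
  have h_zero : Tendsto (fun s => (1 - exp (-s)) * (-s ^ (-a) / a)) (𝓝[>] 0) (𝓝 0) := by
    refine squeeze_zero_norm' (a := fun s => s ^ (1 - a) / a) ?_ ?_
    · filter_upwards [self_mem_nhdsWithin] with s (hs : 0 < s)
      rw [norm_mul, norm_of_nonneg (one_sub_exp_neg_nonneg hs.le), norm_div, norm_neg,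
        norm_of_nonneg (rpow_nonneg hs.le _), norm_of_nonneg ha0.le]
      calc (1 - exp (-s)) * (s ^ (-a) / a) ≤ s * (s ^ (-a) / a) := by
            gcongr; exact one_sub_exp_neg_le s
        _ = s ^ (1 - a) / a := by rw [sub_eq_neg_add, rpow_add_one hs.ne']; ring
    · have := tendsto_nhdsWithin_of_tendsto_nhds (s := Ioi 0)
        (continuousAt_rpow_const 0 (1 - a) (Or.inr (by linarith))).tendsto
      simpa [zero_rpow (by linarith : 1 - a ≠ 0)] using this.div_const a
  have h_infty : Tendsto (fun s => (1 - exp (-s)) * (-s ^ (-a) / a)) atTop (𝓝 0) := by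
    simpa using (tendsto_exp_neg_atTop_nhds_zero.const_sub 1).mul
      ((tendsto_rpow_neg_atTop ha0).neg.div_const a)
  calc ∫ s in Ioi 0, s ^ (-(1 + a)) * (1 - exp (-s))
      = ∫ s in Ioi 0, (1 - exp (-s)) * s ^ (-(1 + a)) := by simp_rw [mul_comm]
    _ = 0 - 0 - ∫ s in Ioi 0, exp (-s) * (-s ^ (-a) / a) :=
      integral_Ioi_mul_deriv_eq_deriv_mul hu hv huv' hu'v h_zero h_infty
    _ = Gamma (1 - a) / a := by
      rw [Gamma_eq_integral (by linarith), ← integral_div, sub_self, zero_sub, ← integral_neg]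
      refine setIntegral_congr_fun measurableSet_Ioi fun s _ => ?_
      ring_nf
    _ = -Gamma (-a) := by
      rw [show 1 - a = -a + 1 by ring, Gamma_add_one (neg_ne_zero.2 ha0.ne')]
      field_simp
end

lemma image_half_sq_Ioi : (fun t : ℝ => t ^ 2 / 2) '' Ioi 0 = Ioi 0 := by
  ext s
  constructor
  · rintro ⟨t, ht, rfl⟩
    exact show (0 : ℝ) < t ^ 2 / 2 from half_pos (pow_pos ht 2)
  · intro (hs : 0 < s)
    refine ⟨√(2 * s), sqrt_pos.2 (by linarith), ?_⟩
    simp only [sq_sqrt (by linarith : (0 : ℝ) ≤ 2 * s)]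
    ring

lemma injOn_half_sq_Ioi : InjOn (fun t : ℝ => t ^ 2 / 2) (Ioi 0) :=
  fun x (hx : 0 < x) y (hy : 0 < y) h => by
    simpa [pow_left_inj₀ hx.le hy.le two_ne_zero] using h

lemma hasDerivWithinAt_half_sq (s : Set ℝ) (t : ℝ) :
    HasDerivWithinAt (fun t : ℝ => t ^ 2 / 2) t s t := by
  simpa using ((hasDerivAt_pow 2 t).div_const 2).hasDerivWithinAt

section
variable {E : Type*} [NormedAddCommGroup E] [NormedSpace ℝ E]

lemma integrableOn_Ioi_comp_half_sq_iff (g : ℝ → E) :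
    IntegrableOn (fun t => t • g (t ^ 2 / 2)) (Ioi 0) ↔ IntegrableOn g (Ioi 0) := by
  have := integrableOn_image_iff_integrableOn_abs_deriv_smul measurableSet_Ioi
    (fun t _ => hasDerivWithinAt_half_sq _ t) injOn_half_sq_Ioi g
  rw [image_half_sq_Ioi] at this
  rw [this]
  exact integrableOn_congr_fun (fun t (ht : 0 < t) => by rw [abs_of_pos ht]) measurableSet_Ioi

lemma integral_Ioi_comp_half_sq (g : ℝ → E) :
    ∫ t in Ioi 0, t • g (t ^ 2 / 2) = ∫ s in Ioi 0, g s := by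
  have := integral_image_eq_integral_abs_deriv_smul measurableSet_Ioi
    (fun t _ => hasDerivWithinAt_half_sq _ t) injOn_half_sq_Ioi g
  rw [image_half_sq_Ioi] at this
  rw [this]
  exact setIntegral_congr_fun measurableSet_Ioi fun t (ht : 0 < t) => by rw [abs_of_pos ht]

end

/-- For every `0 < μ < 2`, the integral
`I(μ) = ∫_0^∞ t^{-(1+μ)} (1 - e^{-t²/2}) dt` converges and equals `-2^{-(1+μ/2)} Γ(-μ/2)`. -/
theorem I_mu_integral (μ : ℝ) (hμ0 : 0 < μ) (hμ2 : μ < 2) :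
    IntegrableOn (fun t : ℝ => t ^ (-(1 + μ)) * (1 - Real.exp (-t ^ 2 / 2))) (Ioi 0) volume ∧
    ∫ t in Ioi (0 : ℝ), t ^ (-(1 + μ)) * (1 - Real.exp (-t ^ 2 / 2))
      = -(2 : ℝ) ^ (-(1 + μ / 2)) * Real.Gamma (-μ / 2) := by
  set g : ℝ → ℝ := fun s => s ^ (-(1 + μ / 2)) * (1 - exp (-s))
  have hg : IntegrableOn g (Ioi 0) :=
    integrableOn_rpow_mul_one_sub_exp_neg (by linarith) (by linarith)
  have hsubst : EqOn (fun t => t ^ (-(1 + μ)) * (1 - exp (-t ^ 2 / 2)))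
      (fun t => 2 ^ (-(1 + μ / 2)) * (t • g (t ^ 2 / 2))) (Ioi 0) := fun t (ht : 0 < t) => by
    have hpow :
        (2 : ℝ) ^ (-(1 + μ / 2)) * (t ^ 2 / 2) ^ (-(1 + μ / 2)) * t = t ^ (-(1 + μ)) := by
      rw [← mul_rpow zero_le_two (by positivity), mul_div_cancel₀ _ two_ne_zero,
        ← rpow_natCast_mul ht.le, ← rpow_add_one ht.ne']
      congr 1
      push_cast
      ring
    simp only [g, smul_eq_mul, neg_div, ← hpow]
    ring
  refine ⟨IntegrableOn.congr_fun (((integrableOn_Ioi_comp_half_sq_iff g).2 hg).const_mul _)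
    hsubst.symm measurableSet_Ioi, ?_⟩
  rw [setIntegral_congr_fun measurableSet_Ioi hsubst, integral_const_mul,
    integral_Ioi_comp_half_sq, integral_rpow_mul_one_sub_exp_neg (by linarith) (by linarith),
    neg_div]
  ring
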